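/- If u is continuously differentiable on a convex domain X ⊆ ℝⁿ (n ≥ 2) vanishing at infinity, |grad u| ∈ G(ψ; a, b) with 1 ≤ a < b < n, and the L^p Sobolev inequality |Bu|_q ≤ C₁ q^{1−1/n} ||grad u||_p holds with p = qn/(q+m), then ‖Bu‖_{G(ν; A₂, B₂)} ≤ C₁ ‖|grad u|‖_{G(ψ; a,b)}, where A₂ = max(1, am/(n−a)), B₂ = bm/(n−b), and ν(q) = q^{1−1/n} ψ(qn/(q+m)). -/

import Mathlib

/-! The exponent map `q ↦ qn/(q+m)` sends `(A₂, B₂)` into `(a, b)`, so each term of the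
supremum defining the grand norm of `Bu` is dominated, after the `q^{1-1/n}` weights of the
Sobolev constant and of `ν` cancel, by `C₁` times a term of the supremum for `|grad u|`. -/

open MeasureTheory Set ENNReal

/-- Grand Lebesgue functional. -/
noncomputable def GNorm {X : Type*} [MeasurableSpace X] (μ : Measure X)
    (ψ : ℝ → ℝ) (a b : ℝ) (h : X → ℝ) : ℝ≥0∞ :=
  ⨆ p ∈ Set.Ioo a b, eLpNorm h (ENNReal.ofReal p) μ / ENNReal.ofReal (ψ p)

theorem le_GNorm {X : Type*} [MeasurableSpace X] {μ : Measure X} {ψ : ℝ → ℝ} {a b p : ℝ}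
    (hp : p ∈ Ioo a b) (h : X → ℝ) :
    eLpNorm h (ENNReal.ofReal p) μ / ENNReal.ofReal (ψ p) ≤ GNorm μ ψ a b h :=
  le_iSup₂_of_le (f := fun p _ => eLpNorm h (ENNReal.ofReal p) μ / ENNReal.ofReal (ψ p))
    p hp le_rfl

theorem GNorm_le_mul_GNorm_of_mapsTo {X Y : Type*} [MeasurableSpace X] [MeasurableSpace Y]
    {μ : Measure X} {ν : Measure Y} {ψ χ : ℝ → ℝ} {a b A B : ℝ} {f : X → ℝ} {g : Y → ℝ}
    {c : ℝ≥0∞} {φ : ℝ → ℝ} (hφ : MapsTo φ (Ioo A B) (Ioo a b))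
    (h : ∀ q ∈ Ioo A B, eLpNorm g (ENNReal.ofReal q) ν / ENNReal.ofReal (χ q)
      ≤ c * (eLpNorm f (ENNReal.ofReal (φ q)) μ / ENNReal.ofReal (ψ (φ q)))) :
    GNorm ν χ A B g ≤ c * GNorm μ ψ a b f :=
  iSup₂_le fun q hq => (h q hq).trans (mul_le_mul_right (le_GNorm (hφ hq) f) c)

theorem mul_div_add_mem_Ioo {a b n m q : ℝ} (han : a < n) (hbn : b < n) (hm : 0 ≤ m)
    (hq₀ : 0 < q) (hq : q ∈ Ioo (a * m / (n - a)) (b * m / (n - b))) :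
    q * n / (q + m) ∈ Ioo a b := by
  have hqm : 0 < q + m := by linarith
  obtain ⟨hqa, hqb⟩ := hq
  rw [div_lt_iff₀ (sub_pos.2 han)] at hqa
  rw [lt_div_iff₀ (sub_pos.2 hbn)] at hqb
  constructor
  · rw [lt_div_iff₀ hqm]; linarith
  · rw [div_lt_iff₀ hqm]; linarith

theorem ENNReal.ofReal_mul_mul_div_ofReal_mul {C t y : ℝ} (ht : 0 < t) (x : ℝ≥0∞) :
    ENNReal.ofReal (C * t) * x / ENNReal.ofReal (t * y)
      = ENNReal.ofReal C * (x / ENNReal.ofReal y) := by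
  rw [ENNReal.ofReal_mul' ht.le, ENNReal.ofReal_mul ht.le, mul_right_comm,
    mul_comm _ (ENNReal.ofReal t),
    ENNReal.mul_div_mul_left _ _ (ENNReal.ofReal_pos.2 ht).ne' ofReal_ne_top, mul_div_assoc]

theorem sobolev_grand_lebesgue_general
    {X Y : Type*} [MeasurableSpace X] [MeasurableSpace Y]
    (μX : Measure X) (μY : Measure Y)
    (n m : ℕ)
    (a b : ℝ) (hab : a < b) (hbn : b < n)
    (ψ : ℝ → ℝ)
    (C₁ : ℝ)
    (gradu : X → ℝ) (Bu : Y → ℝ)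
    (hSobolev : ∀ q : ℝ, q ∈ Set.Ioo (max 1 (a * m / (n - a))) (b * m / (n - b)) →
      eLpNorm Bu (ENNReal.ofReal q) μY
        ≤ ENNReal.ofReal (C₁ * q ^ (1 - 1 / (n:ℝ))) *
          eLpNorm gradu (ENNReal.ofReal (q * n / (q + m))) μX) :
    GNorm μY (fun q => q ^ (1 - 1 / (n:ℝ)) * ψ (q * n / (q + m)))
        (max 1 (a * m / (n - a))) (b * m / (n - b)) Bu
      ≤ ENNReal.ofReal C₁ * GNorm μX ψ a b gradu := by
  have hq₀ {q : ℝ} (hq : q ∈ Ioo (max 1 (a * m / (n - a))) (b * m / (n - b))) : 0 < q :=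
    zero_lt_one.trans_le ((le_max_left _ _).trans hq.1.le)
  refine GNorm_le_mul_GNorm_of_mapsTo (φ := fun q => q * n / (q + m))
    (fun q hq => mul_div_add_mem_Ioo (hab.trans hbn) hbn m.cast_nonneg (hq₀ hq)
      ⟨(le_max_right _ _).trans_lt hq.1, hq.2⟩) fun q hq => ?_
  calc _ ≤ _ := ENNReal.div_le_div_right (hSobolev q hq) _
    _ = _ := ENNReal.ofReal_mul_mul_div_ofReal_mul (Real.rpow_pos_of_pos (hq₀ hq) _) _

/-- Sobolev embedding in Grand Lebesgue spaces: if the classical `L^p` Sobolev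
inequality `|Bu|_q ≤ C₁ q^{1−1/n} ‖grad u‖_p` holds with `p = qn/(q+m)`, then
`‖Bu‖_{G(ν; A₂, B₂)} ≤ C₁ ‖|grad u|‖_{G(ψ; a, b)}`, where
`A₂ = max(1, am/(n−a))`, `B₂ = bm/(n−b)`, `ν(q) = q^{1−1/n} ψ(qn/(q+m))`.
Here `μX` is the measure on the domain `X`, `μY` the surface measure on the
submanifold `Y`, `gradu` the function `x ↦ |grad u(x)|`, and `Bu` the trace
of `u` on `Y`. -/
theorem sobolev_grand_lebesgue
    {X Y : Type*} [MeasurableSpace X] [MeasurableSpace Y]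
    (μX : Measure X) (μY : Measure Y)
    (n m : ℕ) (hn : 2 ≤ n) (hm : 1 ≤ m) (hmn : m ≤ n)
    (a b : ℝ) (ha : 1 ≤ a) (hab : a < b) (hbn : b < n)
    (ψ : ℝ → ℝ) (hψpos : ∀ p ∈ Set.Ioo a b, 0 < ψ p)
    (C₁ : ℝ) (hC₁ : 0 ≤ C₁)
    (gradu : X → ℝ) (Bu : Y → ℝ)
    (hgradG : GNorm μX ψ a b gradu ≠ ⊤)
    (hSobolev : ∀ q : ℝ, q ∈ Set.Ioo (max 1 (a * m / (n - a))) (b * m / (n - b)) →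
      eLpNorm Bu (ENNReal.ofReal q) μY
        ≤ ENNReal.ofReal (C₁ * q ^ (1 - 1 / (n:ℝ))) *
          eLpNorm gradu (ENNReal.ofReal (q * n / (q + m))) μX) :
    GNorm μY (fun q => q ^ (1 - 1 / (n:ℝ)) * ψ (q * n / (q + m)))
        (max 1 (a * m / (n - a))) (b * m / (n - b)) Bu
      ≤ ENNReal.ofReal C₁ * GNorm μX ψ a b gradu :=
  sobolev_grand_lebesgue_general μX μY n m a b hab hbn ψ C₁ gradu Bu hSobolev
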